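/- arXiv:1607.04488 — 4 statements merged into one kernel-verified Lean document; each statement's English description precedes it below -/
import Mathlib

section
/- Let σ be a d×n real matrix of full rank d ≤ n, A a symmetric positive definite n×n matrix with A⁻¹(Ker σ) = Ker σ, ξ ∈ Im(σᵀ), h > 0 with ξᵀAξ < h². For z ∈ ℝⁿ write z = Π(z) + Π⊥(z) for the orthogonal decomposition onto Im(σᵀ) and Ker(σ). Then the supremum of λᵀz over all λ of the form λ = -ξ + η with η ∈ Ker(σ) and λᵀAλ ≤ h² equals -ξᵀΠ(z) + √(h² − ξᵀAξ)·√(Π⊥(z)ᵀA⁻¹Π⊥(z)), and when Π⊥(z) ≠ 0 it is attained at the unique point λ̄ = -ξ + η̄ with η̄ = √((h²−ξᵀAξ)/(Π⊥(z)ᵀA⁻¹Π⊥(z)))·A⁻¹Π⊥(z). -/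
open Matrix

private lemma ortho_aux {d n : ℕ} (σ : Matrix (Fin d) (Fin n) ℝ)
    {u v : Fin n → ℝ} (hu : u ∈ LinearMap.range (σᵀ.mulVecLin))
    (hv : v ∈ LinearMap.ker (σ.mulVecLin)) : u ⬝ᵥ v = 0 := by
  obtain ⟨y, rfl⟩ := hu
  have hv' : σ *ᵥ v = 0 := hv
  rw [Matrix.mulVecLin_apply, dotProduct_comm, Matrix.dotProduct_mulVec,
    Matrix.vecMul_transpose, hv', zero_dotProduct]

/-- The supremum of `λᵀz` over `λ = -ξ + η`, `η ∈ Ker σ`, `λᵀAλ ≤ h²` equals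
`-ξᵀΠ(z) + √(h² - ξᵀAξ)·√(Π⊥(z)ᵀA⁻¹Π⊥(z))`, and when `Π⊥(z) ≠ 0` it is attained at
the unique `η̄ = √((h²-ξᵀAξ)/(Π⊥(z)ᵀA⁻¹Π⊥(z)))·A⁻¹Π⊥(z)`. -/
theorem stmt4 {d n : ℕ} (hd : 0 < d) (hdn : d ≤ n)
    (σ : Matrix (Fin d) (Fin n) ℝ) (hσ : IsUnit (σ * σᵀ).det)
    (A : Matrix (Fin n) (Fin n) ℝ) (hAs : A.IsSymm) (hApd : A.PosDef)
    (hsep : Submodule.map (A⁻¹).mulVecLin (LinearMap.ker σ.mulVecLin)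
      = LinearMap.ker σ.mulVecLin)
    (h : ℝ) (hh : 0 < h)
    (ξ : Fin n → ℝ) (hξ : ξ ∈ LinearMap.range (σᵀ.mulVecLin))
    (hξA : ξ ⬝ᵥ (A *ᵥ ξ) < h ^ 2)
    (z zP zK : Fin n → ℝ)
    (hzP : zP ∈ LinearMap.range (σᵀ.mulVecLin))
    (hzK : zK ∈ LinearMap.ker (σ.mulVecLin))
    (hdec : z = zP + zK) :
    IsGreatest
      {v : ℝ | ∃ η ∈ LinearMap.ker (σ.mulVecLin),
        (-ξ + η) ⬝ᵥ (A *ᵥ (-ξ + η)) ≤ h ^ 2 ∧ v = (-ξ + η) ⬝ᵥ z}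
      (-(ξ ⬝ᵥ zP) +
        Real.sqrt (h ^ 2 - ξ ⬝ᵥ (A *ᵥ ξ)) * Real.sqrt (zK ⬝ᵥ (A⁻¹ *ᵥ zK))) ∧
    (zK ≠ 0 →
      ∀ η ∈ LinearMap.ker (σ.mulVecLin),
        (-ξ + η) ⬝ᵥ (A *ᵥ (-ξ + η)) ≤ h ^ 2 →
        (-ξ + η) ⬝ᵥ z =
          -(ξ ⬝ᵥ zP) +
            Real.sqrt (h ^ 2 - ξ ⬝ᵥ (A *ᵥ ξ)) * Real.sqrt (zK ⬝ᵥ (A⁻¹ *ᵥ zK)) →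
        η = Real.sqrt ((h ^ 2 - ξ ⬝ᵥ (A *ᵥ ξ)) / (zK ⬝ᵥ (A⁻¹ *ᵥ zK))) • (A⁻¹ *ᵥ zK)) := by
  have hdetA : IsUnit A.det := hApd.det_pos.ne'.isUnit
  have hAAinv : A * A⁻¹ = 1 := Matrix.mul_nonsing_inv A hdetA
  set c2 : ℝ := h ^ 2 - ξ ⬝ᵥ (A *ᵥ ξ) with hc2
  have hc2pos : 0 < c2 := by rw [hc2]; linarith
  set q : ℝ := zK ⬝ᵥ (A⁻¹ *ᵥ zK) with hq
  set w : Fin n → ℝ := A⁻¹ *ᵥ zK with hw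
  have hAw : A *ᵥ w = zK := by
    rw [hw, Matrix.mulVec_mulVec, hAAinv, Matrix.one_mulVec]
  have hwK : w ∈ LinearMap.ker σ.mulVecLin := by
    rw [← hsep]
    exact ⟨zK, hzK, rfl⟩
  have hsymm : ∀ x y : Fin n → ℝ, x ⬝ᵥ (A *ᵥ y) = y ⬝ᵥ (A *ᵥ x) := by
    intro x y
    conv_lhs => rw [Matrix.dotProduct_mulVec, ← hAs.eq, Matrix.vecMul_transpose,
      dotProduct_comm]
  have hnonneg : ∀ x : Fin n → ℝ, 0 ≤ x ⬝ᵥ (A *ᵥ x) := by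
    intro x; simpa using hApd.posSemidef.dotProduct_mulVec_nonneg x
  have hqnn : 0 ≤ q := by
    rw [hq]; simpa using hApd.inv.posSemidef.dotProduct_mulVec_nonneg zK
  have hq0 : q = 0 → zK = 0 := by
    intro h0
    by_contra hne
    have := hApd.inv.dotProduct_mulVec_pos hne
    rw [star_trivial] at this
    rw [hq] at h0; rw [h0] at this; exact lt_irrefl 0 this
  have hwq : w ⬝ᵥ (A *ᵥ w) = q := by
    rw [hAw, dotProduct_comm, hq, hw]
  have hwzK : w ⬝ᵥ zK = q := by rw [dotProduct_comm, hq, hw]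
  -- A maps Ker σ into Ker σ
  have hAK : ∀ η ∈ LinearMap.ker σ.mulVecLin, A *ᵥ η ∈ LinearMap.ker σ.mulVecLin := by
    intro η hη
    rw [← hsep] at hη
    obtain ⟨η', hη', rfl⟩ := hη
    simpa [Matrix.mulVecLin_apply, Matrix.mulVec_mulVec, hAAinv, Matrix.one_mulVec] using hη'
  have hcross : ∀ η ∈ LinearMap.ker σ.mulVecLin, ξ ⬝ᵥ (A *ᵥ η) = 0 := by
    intro η hη
    exact ortho_aux σ hξ (hAK η hη)
  -- expansion lemma
  have hexp : ∀ (x y : Fin n → ℝ) (t : ℝ),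
      (x + t • y) ⬝ᵥ (A *ᵥ (x + t • y))
        = x ⬝ᵥ (A *ᵥ x) + 2 * t * (x ⬝ᵥ (A *ᵥ y)) + t ^ 2 * (y ⬝ᵥ (A *ᵥ y)) := by
    intro x y t
    have hs := hsymm y x
    simp only [Matrix.mulVec_add, Matrix.mulVec_smul, dotProduct_add, add_dotProduct,
      dotProduct_smul, smul_dotProduct, smul_eq_mul]
    rw [hs]; ring
  -- constraint splits
  have hconstr : ∀ η ∈ LinearMap.ker σ.mulVecLin,
      (-ξ + η) ⬝ᵥ (A *ᵥ (-ξ + η)) = ξ ⬝ᵥ (A *ᵥ ξ) + η ⬝ᵥ (A *ᵥ η) := by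
    intro η hη
    have h1 : ξ ⬝ᵥ (A *ᵥ η) = 0 := hcross η hη
    have h2 : η ⬝ᵥ (A *ᵥ ξ) = 0 := by rw [hsymm η ξ, h1]
    simp only [Matrix.mulVec_add, Matrix.mulVec_neg, dotProduct_add, add_dotProduct,
      neg_dotProduct, dotProduct_neg]
    rw [h1, h2]; ring
  -- value splits
  have hval : ∀ η ∈ LinearMap.ker σ.mulVecLin,
      (-ξ + η) ⬝ᵥ z = -(ξ ⬝ᵥ zP) + η ⬝ᵥ zK := by
    intro η hη
    have h1 : ξ ⬝ᵥ zK = 0 := ortho_aux σ hξ hzK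
    have h2 : η ⬝ᵥ zP = 0 := by
      rw [dotProduct_comm]; exact ortho_aux σ hzP hη
    rw [hdec]
    simp only [dotProduct_add, add_dotProduct, neg_dotProduct]
    rw [h1, h2]; ring
  -- Cauchy-Schwarz style upper bound
  have hub : ∀ η ∈ LinearMap.ker σ.mulVecLin, η ⬝ᵥ (A *ᵥ η) ≤ c2 →
      η ⬝ᵥ zK ≤ Real.sqrt c2 * Real.sqrt q := by
    intro η hη hle
    set s : ℝ := η ⬝ᵥ zK with hs
    have hηw : η ⬝ᵥ (A *ᵥ w) = s := by rw [hAw]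
    have hquad : ∀ t : ℝ, 0 ≤ q * (t * t) + (-(2 * s)) * t + η ⬝ᵥ (A *ᵥ η) := by
      intro t
      have h0 := hnonneg (η + (-t) • w)
      rw [hexp η w (-t), hηw, hwq] at h0
      nlinarith [h0]
    have hd := discrim_le_zero hquad
    rw [discrim] at hd
    have hs2 : s ^ 2 ≤ c2 * q := by nlinarith [hd, hle, hqnn]
    calc s ≤ |s| := le_abs_self s
      _ = Real.sqrt (s ^ 2) := (Real.sqrt_sq_eq_abs s).symm
      _ ≤ Real.sqrt (c2 * q) := Real.sqrt_le_sqrt hs2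
      _ = Real.sqrt c2 * Real.sqrt q := Real.sqrt_mul hc2pos.le q
  -- the maximizer
  set t : ℝ := Real.sqrt (c2 / q) with ht
  have ht2 : t * t = c2 / q := Real.mul_self_sqrt (div_nonneg hc2pos.le hqnn)
  have htq : t * q = Real.sqrt c2 * Real.sqrt q := by
    rcases eq_or_ne q 0 with h0 | h0
    · rw [h0, Real.sqrt_zero]; ring
    · have hqpos : 0 < q := lt_of_le_of_ne hqnn (Ne.symm h0)
      rw [ht, Real.sqrt_div hc2pos.le, div_mul_eq_mul_div, mul_div_assoc,
        Real.div_sqrt]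
  refine ⟨⟨⟨t • w, Submodule.smul_mem _ t hwK, ?_, ?_⟩, ?_⟩, ?_⟩
  · -- constraint for maximizer
    rw [hconstr _ (Submodule.smul_mem _ t hwK)]
    have he : (t • w) ⬝ᵥ (A *ᵥ (t • w)) = (c2 / q) * q := by
      simp only [Matrix.mulVec_smul, dotProduct_smul, smul_dotProduct, smul_eq_mul]
      rw [hwq, ← mul_assoc, ht2]
    rw [he]
    rcases eq_or_ne q 0 with h0 | h0
    · rw [h0]; rw [hc2]; linarith
    · rw [div_mul_cancel₀ _ h0, hc2]; linarith
  · -- value at maximizer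
    rw [hval _ (Submodule.smul_mem _ t hwK)]
    simp only [smul_dotProduct, smul_eq_mul]
    rw [hwzK, htq]
  · -- upper bound
    rintro v ⟨η, hη, hcon, rfl⟩
    rw [hval η hη]
    have hle : η ⬝ᵥ (A *ᵥ η) ≤ c2 := by
      have := hconstr η hη
      rw [hc2]; linarith [hcon, this.symm.trans_le hcon]
    have := hub η hη hle
    linarith
  · -- uniqueness
    intro hzKne η hη hcon hvaleq
    have hqpos : 0 < q := by
      rcases lt_or_eq_of_le hqnn with h' | h'
      · exact h'
      · exact absurd (hq0 h'.symm) hzKne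
    have hle : η ⬝ᵥ (A *ᵥ η) ≤ c2 := by
      have := hconstr η hη
      rw [hc2]; linarith [hcon, this.symm.trans_le hcon]
    have hηzK : η ⬝ᵥ zK = Real.sqrt c2 * Real.sqrt q := by
      have := hval η hη
      rw [this] at hvaleq
      linarith [hvaleq]
    have hηw : η ⬝ᵥ (A *ᵥ w) = Real.sqrt c2 * Real.sqrt q := by rw [hAw]; exact hηzK
    -- t * (√c2 * √q) = c2
    have hts : t * Real.sqrt q = Real.sqrt c2 := by
      rw [ht, Real.sqrt_div hc2pos.le,
        div_mul_cancel₀ _ (Real.sqrt_pos.mpr hqpos).ne']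
    have hkey : t * (Real.sqrt c2 * Real.sqrt q) = c2 := by
      rw [mul_comm (Real.sqrt c2), ← mul_assoc, hts, Real.mul_self_sqrt hc2pos.le]
    have h0 : (η + (-t) • w) ⬝ᵥ (A *ᵥ (η + (-t) • w)) ≤ 0 := by
      rw [hexp η w (-t), hηw, hwq]
      have e1 : (-t) ^ 2 * q = c2 := by
        have e : (-t) ^ 2 = t * t := by ring
        rw [e, ht2, div_mul_cancel₀ _ hqpos.ne']
      have e2 : 2 * (-t) * (Real.sqrt c2 * Real.sqrt q) = -(2 * c2) := by
        have e : 2 * (-t) * (Real.sqrt c2 * Real.sqrt q)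
            = -(2 * (t * (Real.sqrt c2 * Real.sqrt q))) := by ring
        rw [e, hkey]
      rw [e2, e1]
      linarith [hle]
    have hzero : η + (-t) • w = 0 := by
      by_contra hne
      have := hApd.dotProduct_mulVec_pos hne
      rw [star_trivial] at this
      linarith
    have : η = t • w := by
      rw [neg_smul] at hzero
      exact add_neg_eq_zero.mp hzero
    rw [this, ht, hw, hq, hc2]
end

section
/- Let d < n, σ ∈ ℝ^{d×n} of full rank, A ∈ ℝ^{n×n} symmetric positive definite with A⁻¹(Ker σ) = Ker σ, h > 0, Z ∈ ℝⁿ, and ξ ∈ Im(σᵀ). Let α′ > 0 denote a constant of ellipticity of A⁻¹, i.e. xᵀA⁻¹x ≥ α′|x|² for all x, and assume |ξ| < h·√α′. Then φ̄ := Π(Z) + √(Π⊥(Z)ᵀA⁻¹Π⊥(Z))·(h² − ξᵀAξ)^{-1/2}·Aξ is the unique minimizer over φ ∈ Im(σᵀ) of the function F(φ) = −ξᵀφ + h·√((Z−φ)ᵀA⁻¹(Z−φ)). -/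
open Matrix

lemma bsym {n : ℕ} {B : Matrix (Fin n) (Fin n) ℝ} (hB : Bᵀ = B) (x y : Fin n → ℝ) :
    x ⬝ᵥ (B *ᵥ y) = y ⬝ᵥ (B *ᵥ x) := by
  rw [dotProduct_mulVec, ← hB, vecMul_transpose, dotProduct_comm, hB]

lemma qnonneg {n : ℕ} {B : Matrix (Fin n) (Fin n) ℝ} (hB : B.PosSemidef) (x : Fin n → ℝ) :
    0 ≤ x ⬝ᵥ (B *ᵥ x) := by simpa using hB.dotProduct_mulVec_nonneg x

lemma qzero {n : ℕ} {B : Matrix (Fin n) (Fin n) ℝ} (hB : B.PosDef) {x : Fin n → ℝ}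
    (hx : x ⬝ᵥ (B *ᵥ x) = 0) : x = 0 := by
  by_contra hne
  exact absurd hx (ne_of_gt (by simpa using hB.dotProduct_mulVec_pos hne))

lemma w_expand {n : ℕ} {B : Matrix (Fin n) (Fin n) ℝ} (hB : Bᵀ = B) (u v : Fin n → ℝ) :
    ((v ⬝ᵥ (B *ᵥ v)) • u - (u ⬝ᵥ (B *ᵥ v)) • v) ⬝ᵥ
      (B *ᵥ ((v ⬝ᵥ (B *ᵥ v)) • u - (u ⬝ᵥ (B *ᵥ v)) • v))
    = (v ⬝ᵥ (B *ᵥ v)) * ((v ⬝ᵥ (B *ᵥ v)) * (u ⬝ᵥ (B *ᵥ u)) - (u ⬝ᵥ (B *ᵥ v))^2) := by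
  have hvu : v ⬝ᵥ (B *ᵥ u) = u ⬝ᵥ (B *ᵥ v) := bsym hB v u
  simp only [Matrix.mulVec_sub, Matrix.mulVec_smul, dotProduct_sub, sub_dotProduct,
    dotProduct_smul, smul_dotProduct, smul_eq_mul]
  rw [hvu]; ring

lemma cs_le {n : ℕ} {B : Matrix (Fin n) (Fin n) ℝ} (hBs : Bᵀ = B) (hB : B.PosDef)
    (u v : Fin n → ℝ) :
    (u ⬝ᵥ (B *ᵥ v))^2 ≤ (u ⬝ᵥ (B *ᵥ u)) * (v ⬝ᵥ (B *ᵥ v)) := by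
  rcases eq_or_ne (v ⬝ᵥ (B *ᵥ v)) 0 with hp | hp
  · have hv : v = 0 := qzero hB hp
    simp [hv]
  · have hw := qnonneg hB.posSemidef ((v ⬝ᵥ (B *ᵥ v)) • u - (u ⬝ᵥ (B *ᵥ v)) • v)
    rw [w_expand hBs] at hw
    have hppos : 0 < v ⬝ᵥ (B *ᵥ v) := lt_of_le_of_ne (qnonneg hB.posSemidef v) (Ne.symm hp)
    nlinarith [hw]

lemma cs_eq {n : ℕ} {B : Matrix (Fin n) (Fin n) ℝ} (hBs : Bᵀ = B) (hB : B.PosDef)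
    (u v : Fin n → ℝ)
    (heq : (u ⬝ᵥ (B *ᵥ v))^2 = (u ⬝ᵥ (B *ᵥ u)) * (v ⬝ᵥ (B *ᵥ v))) :
    (v ⬝ᵥ (B *ᵥ v)) • u = (u ⬝ᵥ (B *ᵥ v)) • v := by
  have hw := w_expand hBs u v
  have h0 : ((v ⬝ᵥ (B *ᵥ v)) • u - (u ⬝ᵥ (B *ᵥ v)) • v) ⬝ᵥ
      (B *ᵥ ((v ⬝ᵥ (B *ᵥ v)) • u - (u ⬝ᵥ (B *ᵥ v)) • v)) = 0 := by
    rw [hw, heq]; ring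
  exact sub_eq_zero.mp (qzero hB h0)

lemma scal1 {h aa c t : ℝ} (hh : 0 < h) (haa : 0 ≤ aa) (hah : aa < h^2) (hc : 0 ≤ c)
    (ht : 0 ≤ t) :
    Real.sqrt aa * t + Real.sqrt c * Real.sqrt (h^2 - aa) ≤ h * Real.sqrt (c + t^2) := by
  have hs2 : Real.sqrt (h^2 - aa) ^ 2 = h^2 - aa := Real.sq_sqrt (by linarith)
  have hr2 : Real.sqrt c ^ 2 = c := Real.sq_sqrt hc
  have ha2 : Real.sqrt aa ^ 2 = aa := Real.sq_sqrt haa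
  have hS2 : Real.sqrt (c + t^2) ^ 2 = c + t^2 := Real.sq_sqrt (by positivity)
  have hSn : 0 ≤ Real.sqrt (c + t^2) := Real.sqrt_nonneg _
  have han : 0 ≤ Real.sqrt aa := Real.sqrt_nonneg _
  have hrn : 0 ≤ Real.sqrt c := Real.sqrt_nonneg _
  have hsn : 0 ≤ Real.sqrt (h^2 - aa) := Real.sqrt_nonneg _
  nlinarith [sq_nonneg (t * Real.sqrt (h^2 - aa) - Real.sqrt aa * Real.sqrt c),
    sq_nonneg (Real.sqrt aa * t + Real.sqrt c * Real.sqrt (h^2 - aa) - h * Real.sqrt (c + t^2)),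
    mul_nonneg (mul_nonneg han ht) (mul_nonneg hrn hsn),
    mul_nonneg (le_of_lt hh) hSn]

lemma scal2 {h aa c t : ℝ} (hh : 0 < h) (haa : 0 ≤ aa) (hah : aa < h^2) (hc : 0 ≤ c)
    (ht : 0 ≤ t)
    (heq : Real.sqrt aa * t + Real.sqrt c * Real.sqrt (h^2 - aa) = h * Real.sqrt (c + t^2)) :
    t * Real.sqrt (h^2 - aa) = Real.sqrt aa * Real.sqrt c := by
  have hs2 : Real.sqrt (h^2 - aa) ^ 2 = h^2 - aa := Real.sq_sqrt (by linarith)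
  have hr2 : Real.sqrt c ^ 2 = c := Real.sq_sqrt hc
  have ha2 : Real.sqrt aa ^ 2 = aa := Real.sq_sqrt haa
  have hS2 : Real.sqrt (c + t^2) ^ 2 = c + t^2 := Real.sq_sqrt (by positivity)
  have heq2 : (Real.sqrt aa * t + Real.sqrt c * Real.sqrt (h^2 - aa))^2 = h^2 * (c + t^2) := by
    rw [heq, mul_pow, hS2]
  have key : (t * Real.sqrt (h^2 - aa) - Real.sqrt aa * Real.sqrt c)^2 = 0 := by
    linear_combination (-1 : ℝ) * heq2 + (t^2 + Real.sqrt c ^ 2) * hs2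
      + (Real.sqrt c ^ 2 + t^2) * ha2 + h^2 * hr2
  have := pow_eq_zero_iff (n := 2) (by norm_num) |>.mp key
  linarith [sub_eq_zero.mp this]

lemma scal3 {h aa c : ℝ} (hh : 0 < h) (haa : 0 ≤ aa) (hah : aa < h^2) (hc : 0 ≤ c) :
    -(Real.sqrt c / Real.sqrt (h^2 - aa) * aa) +
      h * Real.sqrt (c + (Real.sqrt c / Real.sqrt (h^2 - aa))^2 * aa)
    = Real.sqrt c * Real.sqrt (h^2 - aa) := by
  have hspos : 0 < Real.sqrt (h^2 - aa) := Real.sqrt_pos.mpr (by linarith)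
  have hs2 : Real.sqrt (h^2 - aa) ^ 2 = h^2 - aa := Real.sq_sqrt (by linarith)
  have hr2 : Real.sqrt c ^ 2 = c := Real.sq_sqrt hc
  have hrn : 0 ≤ Real.sqrt c := Real.sqrt_nonneg _
  have harg : c + (Real.sqrt c / Real.sqrt (h^2 - aa))^2 * aa
      = (Real.sqrt c * h / Real.sqrt (h^2 - aa))^2 := by
    field_simp
    nlinarith [hs2, hr2]
  rw [harg, Real.sqrt_sq (by positivity)]
  field_simp
  linear_combination (-Real.sqrt c) * hs2

lemma orth_range_ker {d n : ℕ} (σ : Matrix (Fin d) (Fin n) ℝ) (x v : Fin n → ℝ)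
    (hx : x ∈ LinearMap.range (σᵀ.mulVecLin)) (hv : v ∈ LinearMap.ker σ.mulVecLin) :
    x ⬝ᵥ v = 0 := by
  obtain ⟨w, rfl⟩ := hx
  have hv' : σ *ᵥ v = 0 := hv
  show (σᵀ *ᵥ w) ⬝ᵥ v = 0
  rw [dotProduct_comm, dotProduct_mulVec, vecMul_transpose, hv', zero_dotProduct]

lemma mem_range_of_orth {d n : ℕ} (σ : Matrix (Fin d) (Fin n) ℝ)
    (hσ : IsUnit (σ * σᵀ).det) (x : Fin n → ℝ)
    (hx : ∀ v ∈ LinearMap.ker σ.mulVecLin, x ⬝ᵥ v = 0) :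
    x ∈ LinearMap.range (σᵀ.mulVecLin) := by
  set y := σᵀ *ᵥ ((σ * σᵀ)⁻¹ *ᵥ (σ *ᵥ x)) with hy
  have hyR : y ∈ LinearMap.range (σᵀ.mulVecLin) := ⟨(σ * σᵀ)⁻¹ *ᵥ (σ *ᵥ x), rfl⟩
  have hker : x - y ∈ LinearMap.ker σ.mulVecLin := by
    show σ *ᵥ (x - y) = 0
    rw [Matrix.mulVec_sub, hy, Matrix.mulVec_mulVec, Matrix.mulVec_mulVec,
      Matrix.mul_nonsing_inv _ hσ, Matrix.one_mulVec, sub_self]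
  have h1 : x ⬝ᵥ (x - y) = 0 := hx _ hker
  have h2 : y ⬝ᵥ (x - y) = 0 := orth_range_ker σ y _ hyR hker
  have h3 : (x - y) ⬝ᵥ (x - y) = 0 := by
    rw [sub_dotProduct, h1, h2, sub_zero]
  have := dotProduct_self_eq_zero.mp h3
  rw [sub_eq_zero] at this
  rw [this]; exact hyR

/-- `φ̄ = Π(Z) + √(Π⊥(Z)ᵀA⁻¹Π⊥(Z)) (h²-ξᵀAξ)^{-1/2} Aξ` is the unique minimizer on
`Im(σᵀ)` of `F(φ) = -ξᵀφ + h √((Z-φ)ᵀA⁻¹(Z-φ))`. -/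
theorem stmt5 {d n : ℕ} (hd : 0 < d) (hdn : d < n)
    (σ : Matrix (Fin d) (Fin n) ℝ) (hσ : IsUnit (σ * σᵀ).det)
    (A : Matrix (Fin n) (Fin n) ℝ) (hAs : A.IsSymm) (hApd : A.PosDef)
    (hsep : Submodule.map (A⁻¹).mulVecLin (LinearMap.ker σ.mulVecLin)
      = LinearMap.ker σ.mulVecLin)
    (α' : ℝ) (hα' : 0 < α')
    (hell : ∀ x : Fin n → ℝ, α' * (x ⬝ᵥ x) ≤ x ⬝ᵥ (A⁻¹ *ᵥ x))
    (h : ℝ) (hh : 0 < h)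
    (ξ : Fin n → ℝ) (hξ : ξ ∈ LinearMap.range (σᵀ.mulVecLin))
    (hξh : Real.sqrt (ξ ⬝ᵥ ξ) < h * Real.sqrt α')
    (Z ZP ZK : Fin n → ℝ)
    (hZP : ZP ∈ LinearMap.range (σᵀ.mulVecLin))
    (hZK : ZK ∈ LinearMap.ker (σ.mulVecLin))
    (hdec : Z = ZP + ZK)
    (F : (Fin n → ℝ) → ℝ)
    (hF : ∀ φ, F φ = -(ξ ⬝ᵥ φ) + h * Real.sqrt ((Z - φ) ⬝ᵥ (A⁻¹ *ᵥ (Z - φ))))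
    (φbar : Fin n → ℝ)
    (hφbar : φbar = ZP +
      (Real.sqrt (ZK ⬝ᵥ (A⁻¹ *ᵥ ZK)) / Real.sqrt (h ^ 2 - ξ ⬝ᵥ (A *ᵥ ξ))) • (A *ᵥ ξ)) :
    φbar ∈ LinearMap.range (σᵀ.mulVecLin) ∧
    (∀ φ ∈ LinearMap.range (σᵀ.mulVecLin), F φbar ≤ F φ) ∧
    (∀ φ ∈ LinearMap.range (σᵀ.mulVecLin), F φ = F φbar → φ = φbar) := by
  have hAdet : IsUnit A.det := hApd.det_pos.ne'.isUnit
  have hAs' : Aᵀ = A := hAs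
  have hBs : (A⁻¹)ᵀ = A⁻¹ := by rw [Matrix.transpose_nonsing_inv, hAs']
  have hBpd : (A⁻¹).PosDef := hApd.inv
  have hBA : ∀ x : Fin n → ℝ, A⁻¹ *ᵥ (A *ᵥ x) = x := by
    intro x
    rw [Matrix.mulVec_mulVec, Matrix.nonsing_inv_mul _ hAdet, Matrix.one_mulVec]
  have hAB : ∀ x : Fin n → ℝ, A *ᵥ (A⁻¹ *ᵥ x) = x := by
    intro x
    rw [Matrix.mulVec_mulVec, Matrix.mul_nonsing_inv _ hAdet, Matrix.one_mulVec]
  -- kernel stability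
  have hBk : ∀ v ∈ LinearMap.ker σ.mulVecLin, A⁻¹ *ᵥ v ∈ LinearMap.ker σ.mulVecLin := by
    intro v hv
    rw [← hsep]
    exact ⟨v, hv, rfl⟩
  have hAk : ∀ v ∈ LinearMap.ker σ.mulVecLin, A *ᵥ v ∈ LinearMap.ker σ.mulVecLin := by
    intro v hv
    rw [← hsep] at hv
    obtain ⟨u, hu, rfl⟩ := hv
    have : A *ᵥ ((A⁻¹).mulVecLin u) = u := hAB u
    rw [this]
    exact hu
  have hAxiR : A *ᵥ ξ ∈ LinearMap.range σᵀ.mulVecLin := by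
    apply mem_range_of_orth σ hσ
    intro v hv
    rw [dotProduct_comm, bsym hAs' v ξ]
    exact orth_range_ker σ ξ _ hξ (hAk v hv)
  have crossB : ∀ u ∈ LinearMap.range σᵀ.mulVecLin, ∀ v ∈ LinearMap.ker σ.mulVecLin,
      u ⬝ᵥ (A⁻¹ *ᵥ v) = 0 := fun u hu v hv => orth_range_ker σ u _ hu (hBk v hv)
  -- basic quantities
  have hqA : (A *ᵥ ξ) ⬝ᵥ (A⁻¹ *ᵥ (A *ᵥ ξ)) = ξ ⬝ᵥ (A *ᵥ ξ) := by
    rw [hBA, dotProduct_comm]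
  have haa0 : 0 ≤ ξ ⬝ᵥ (A *ᵥ ξ) := hqA ▸ qnonneg hBpd.posSemidef (A *ᵥ ξ)
  have hc0 : 0 ≤ ZK ⬝ᵥ (A⁻¹ *ᵥ ZK) := qnonneg hBpd.posSemidef ZK
  -- a² < h²
  have hxx0 : 0 ≤ ξ ⬝ᵥ ξ := Finset.sum_nonneg fun i _ => mul_self_nonneg (ξ i)
  have hxixi : ξ ⬝ᵥ ξ < h ^ 2 * α' := by
    nlinarith [mul_self_lt_mul_self (Real.sqrt_nonneg (ξ ⬝ᵥ ξ)) hξh,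
      Real.sq_sqrt hxx0, Real.sq_sqrt hα'.le]
  have hcs0 : (ξ ⬝ᵥ (A *ᵥ ξ))^2 ≤ (ξ ⬝ᵥ ξ) * ((A *ᵥ ξ) ⬝ᵥ (A *ᵥ ξ)) := by
    have := cs_le (B := (1 : Matrix (Fin n) (Fin n) ℝ)) (by simp) Matrix.PosDef.one ξ (A *ᵥ ξ)
    simpa [Matrix.one_mulVec] using this
  have hell' : α' * ((A *ᵥ ξ) ⬝ᵥ (A *ᵥ ξ)) ≤ ξ ⬝ᵥ (A *ᵥ ξ) := by
    have := hell (A *ᵥ ξ)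
    rwa [hqA] at this
  have haah : ξ ⬝ᵥ (A *ᵥ ξ) < h ^ 2 := by
    rcases eq_or_lt_of_le haa0 with he | hpos
    · rw [← he]; positivity
    · have hAA0 : 0 ≤ (A *ᵥ ξ) ⬝ᵥ (A *ᵥ ξ) :=
        Finset.sum_nonneg fun i _ => mul_self_nonneg _
      nlinarith [mul_le_mul_of_nonneg_left hell' hxx0,
        mul_lt_mul_of_pos_right hxixi hpos,
        mul_le_mul_of_nonneg_left hcs0 hα'.le, mul_pos hα' hpos]
  have hs2pos : (0:ℝ) < h ^ 2 - ξ ⬝ᵥ (A *ᵥ ξ) := by linarith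
  have hspos : 0 < Real.sqrt (h ^ 2 - ξ ⬝ᵥ (A *ᵥ ξ)) := Real.sqrt_pos.mpr hs2pos
  -- membership of φbar
  have hφbarR : φbar ∈ LinearMap.range σᵀ.mulVecLin := by
    rw [hφbar]
    exact Submodule.add_mem _ hZP (Submodule.smul_mem _ _ hAxiR)
  -- general formula for F on the range
  have hψR : ∀ φ ∈ LinearMap.range σᵀ.mulVecLin,
      φ - ZP ∈ LinearMap.range σᵀ.mulVecLin := fun φ hφ => Submodule.sub_mem _ hφ hZP
  have hFf : ∀ φ ∈ LinearMap.range σᵀ.mulVecLin,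
      F φ = -(ξ ⬝ᵥ ZP) + (-(ξ ⬝ᵥ (φ - ZP)) +
        h * Real.sqrt (ZK ⬝ᵥ (A⁻¹ *ᵥ ZK) + (φ - ZP) ⬝ᵥ (A⁻¹ *ᵥ (φ - ZP)))) := by
    intro φ hφ
    have hψ := hψR φ hφ
    have hZφ : Z - φ = ZK - (φ - ZP) := by rw [hdec]; abel
    have h1 : (φ - ZP) ⬝ᵥ (A⁻¹ *ᵥ ZK) = 0 := crossB _ hψ ZK hZK
    have h2 : ZK ⬝ᵥ (A⁻¹ *ᵥ (φ - ZP)) = 0 := by rw [bsym hBs]; exact h1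
    have hq : (Z - φ) ⬝ᵥ (A⁻¹ *ᵥ (Z - φ))
        = ZK ⬝ᵥ (A⁻¹ *ᵥ ZK) + (φ - ZP) ⬝ᵥ (A⁻¹ *ᵥ (φ - ZP)) := by
      rw [hZφ]
      simp only [Matrix.mulVec_sub, dotProduct_sub, sub_dotProduct] at h1 h2 ⊢
      linarith
    have hxi : ξ ⬝ᵥ φ = ξ ⬝ᵥ ZP + ξ ⬝ᵥ (φ - ZP) := by
      rw [← dotProduct_add]
      congr 1
      abel
    rw [hF φ, hq, hxi]
    ring
  -- the inner product identity and Cauchy–Schwarz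
  have hxiψ_eq : ∀ ψ : Fin n → ℝ, (A *ᵥ ξ) ⬝ᵥ (A⁻¹ *ᵥ ψ) = ξ ⬝ᵥ ψ := by
    intro ψ
    rw [bsym hBs, hBA, dotProduct_comm]
  have hcsψ : ∀ ψ : Fin n → ℝ, (ξ ⬝ᵥ ψ)^2 ≤ (ξ ⬝ᵥ (A *ᵥ ξ)) * (ψ ⬝ᵥ (A⁻¹ *ᵥ ψ)) := by
    intro ψ
    have := cs_le hBs hBpd (A *ᵥ ξ) ψ
    rwa [hxiψ_eq, hqA] at this
  have hxiψ_le : ∀ ψ : Fin n → ℝ, ξ ⬝ᵥ ψ ≤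
      Real.sqrt (ξ ⬝ᵥ (A *ᵥ ξ)) * Real.sqrt (ψ ⬝ᵥ (A⁻¹ *ᵥ ψ)) := by
    intro ψ
    calc ξ ⬝ᵥ ψ ≤ |ξ ⬝ᵥ ψ| := le_abs_self _
    _ = Real.sqrt ((ξ ⬝ᵥ ψ)^2) := (Real.sqrt_sq_eq_abs _).symm
    _ ≤ Real.sqrt ((ξ ⬝ᵥ (A *ᵥ ξ)) * (ψ ⬝ᵥ (A⁻¹ *ᵥ ψ))) := Real.sqrt_le_sqrt (hcsψ ψ)
    _ = Real.sqrt (ξ ⬝ᵥ (A *ᵥ ξ)) * Real.sqrt (ψ ⬝ᵥ (A⁻¹ *ᵥ ψ)) := Real.sqrt_mul haa0 _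
  -- value of F at φbar
  have hψbar : φbar - ZP
      = (Real.sqrt (ZK ⬝ᵥ (A⁻¹ *ᵥ ZK)) / Real.sqrt (h ^ 2 - ξ ⬝ᵥ (A *ᵥ ξ))) • (A *ᵥ ξ) := by
    rw [hφbar]; abel
  have hqbar : (φbar - ZP) ⬝ᵥ (A⁻¹ *ᵥ (φbar - ZP))
      = (Real.sqrt (ZK ⬝ᵥ (A⁻¹ *ᵥ ZK)) / Real.sqrt (h ^ 2 - ξ ⬝ᵥ (A *ᵥ ξ)))^2
        * (ξ ⬝ᵥ (A *ᵥ ξ)) := by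
    rw [hψbar]
    simp only [Matrix.mulVec_smul, smul_dotProduct, dotProduct_smul, smul_eq_mul]
    rw [hqA]
    ring
  have hxibar : ξ ⬝ᵥ (φbar - ZP)
      = Real.sqrt (ZK ⬝ᵥ (A⁻¹ *ᵥ ZK)) / Real.sqrt (h ^ 2 - ξ ⬝ᵥ (A *ᵥ ξ))
        * (ξ ⬝ᵥ (A *ᵥ ξ)) := by
    rw [hψbar, dotProduct_smul, smul_eq_mul]
  have hFbar : F φbar = -(ξ ⬝ᵥ ZP) +
      Real.sqrt (ZK ⬝ᵥ (A⁻¹ *ᵥ ZK)) * Real.sqrt (h ^ 2 - ξ ⬝ᵥ (A *ᵥ ξ)) := by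
    rw [hFf φbar hφbarR, hqbar, hxibar, scal3 hh haa0 haah hc0]
  refine ⟨hφbarR, ?_, ?_⟩
  · intro φ hφ
    rw [hFf φ hφ, hFbar]
    have hq0 : 0 ≤ (φ - ZP) ⬝ᵥ (A⁻¹ *ᵥ (φ - ZP)) := qnonneg hBpd.posSemidef _
    have ht2 : Real.sqrt ((φ - ZP) ⬝ᵥ (A⁻¹ *ᵥ (φ - ZP))) ^ 2
        = (φ - ZP) ⬝ᵥ (A⁻¹ *ᵥ (φ - ZP)) := Real.sq_sqrt hq0
    have h1 := hxiψ_le (φ - ZP)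
    have h2 := scal1 hh haa0 haah hc0
      (Real.sqrt_nonneg ((φ - ZP) ⬝ᵥ (A⁻¹ *ᵥ (φ - ZP))))
    rw [ht2] at h2
    linarith
  · intro φ hφ hFeq
    rw [hFf φ hφ, hFbar] at hFeq
    have hq0 : 0 ≤ (φ - ZP) ⬝ᵥ (A⁻¹ *ᵥ (φ - ZP)) := qnonneg hBpd.posSemidef _
    have ht2 : Real.sqrt ((φ - ZP) ⬝ᵥ (A⁻¹ *ᵥ (φ - ZP))) ^ 2
        = (φ - ZP) ⬝ᵥ (A⁻¹ *ᵥ (φ - ZP)) := Real.sq_sqrt hq0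
    have h1 := hxiψ_le (φ - ZP)
    have h2 := scal1 hh haa0 haah hc0
      (Real.sqrt_nonneg ((φ - ZP) ⬝ᵥ (A⁻¹ *ᵥ (φ - ZP))))
    rw [ht2] at h2
    have e1 : ξ ⬝ᵥ (φ - ZP)
        = Real.sqrt (ξ ⬝ᵥ (A *ᵥ ξ)) * Real.sqrt ((φ - ZP) ⬝ᵥ (A⁻¹ *ᵥ (φ - ZP))) := by
      linarith
    have e2 : Real.sqrt (ξ ⬝ᵥ (A *ᵥ ξ)) * Real.sqrt ((φ - ZP) ⬝ᵥ (A⁻¹ *ᵥ (φ - ZP)))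
        + Real.sqrt (ZK ⬝ᵥ (A⁻¹ *ᵥ ZK)) * Real.sqrt (h ^ 2 - ξ ⬝ᵥ (A *ᵥ ξ))
        = h * Real.sqrt (ZK ⬝ᵥ (A⁻¹ *ᵥ ZK) + (φ - ZP) ⬝ᵥ (A⁻¹ *ᵥ (φ - ZP))) := by
      linarith
    have e3 : Real.sqrt ((φ - ZP) ⬝ᵥ (A⁻¹ *ᵥ (φ - ZP)))
          * Real.sqrt (h ^ 2 - ξ ⬝ᵥ (A *ᵥ ξ))
        = Real.sqrt (ξ ⬝ᵥ (A *ᵥ ξ)) * Real.sqrt (ZK ⬝ᵥ (A⁻¹ *ᵥ ZK)) := by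
      apply scal2 hh haa0 haah hc0 (Real.sqrt_nonneg _)
      rw [ht2]
      exact e2
    rcases eq_or_lt_of_le haa0 with hA0 | hApos
    · -- ξᵀAξ = 0 : then Aξ = 0 and ψ = 0
      have hAxi0 : A *ᵥ ξ = 0 := qzero hBpd (by rw [hqA, ← hA0])
      have haasqrt : Real.sqrt (ξ ⬝ᵥ (A *ᵥ ξ)) = 0 := by rw [← hA0, Real.sqrt_zero]
      have ht0 : Real.sqrt ((φ - ZP) ⬝ᵥ (A⁻¹ *ᵥ (φ - ZP))) = 0 := by
        rw [haasqrt, zero_mul] at e3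
        exact (mul_eq_zero.mp e3).resolve_right (ne_of_gt hspos)
      have hψ0 : φ - ZP = 0 := qzero hBpd ((Real.sqrt_eq_zero hq0).mp ht0)
      rw [hφbar, hAxi0, smul_zero, add_zero]
      exact sub_eq_zero.mp hψ0
    · rcases eq_or_lt_of_le hc0 with hC0 | hCpos
      · -- c = 0
        have hcsqrt : Real.sqrt (ZK ⬝ᵥ (A⁻¹ *ᵥ ZK)) = 0 := by rw [← hC0, Real.sqrt_zero]
        have ht0 : Real.sqrt ((φ - ZP) ⬝ᵥ (A⁻¹ *ᵥ (φ - ZP))) = 0 := by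
          rw [hcsqrt, mul_zero] at e3
          exact (mul_eq_zero.mp e3).resolve_right (ne_of_gt hspos)
        have hψ0 : φ - ZP = 0 := qzero hBpd ((Real.sqrt_eq_zero hq0).mp ht0)
        rw [hφbar, hcsqrt, zero_div, zero_smul, add_zero]
        exact sub_eq_zero.mp hψ0
      · -- main case
        have hapos : 0 < Real.sqrt (ξ ⬝ᵥ (A *ᵥ ξ)) := Real.sqrt_pos.mpr hApos
        have hcpos : 0 < Real.sqrt (ZK ⬝ᵥ (A⁻¹ *ᵥ ZK)) := Real.sqrt_pos.mpr hCpos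
        have htpos : 0 < Real.sqrt ((φ - ZP) ⬝ᵥ (A⁻¹ *ᵥ (φ - ZP))) := by
          rcases (Real.sqrt_nonneg ((φ - ZP) ⬝ᵥ (A⁻¹ *ᵥ (φ - ZP)))).lt_or_eq with hlt | heq0
          · exact hlt
          · exfalso
            rw [← heq0, zero_mul] at e3
            exact absurd e3.symm (ne_of_gt (mul_pos hapos hcpos))
        have hqψpos : 0 < (φ - ZP) ⬝ᵥ (A⁻¹ *ᵥ (φ - ZP)) := by
          rw [← ht2]; exact pow_pos htpos 2
        have e4 : (ξ ⬝ᵥ (φ - ZP))^2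
            = (ξ ⬝ᵥ (A *ᵥ ξ)) * ((φ - ZP) ⬝ᵥ (A⁻¹ *ᵥ (φ - ZP))) := by
          rw [e1, mul_pow, Real.sq_sqrt haa0, ht2]
        have e5 := cs_eq hBs hBpd (A *ᵥ ξ) (φ - ZP) (by rw [hxiψ_eq, hqA]; exact e4)
        rw [hxiψ_eq] at e5
        have hippos : 0 < ξ ⬝ᵥ (φ - ZP) := by rw [e1]; exact mul_pos hapos htpos
        have e6 : ((φ - ZP) ⬝ᵥ (A⁻¹ *ᵥ (φ - ZP)) / (ξ ⬝ᵥ (φ - ZP))) • (A *ᵥ ξ)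
            = φ - ZP := by
          rw [div_eq_inv_mul, ← smul_smul, e5, smul_smul,
            inv_mul_cancel₀ (ne_of_gt hippos), one_smul]
        have e7 : (φ - ZP) ⬝ᵥ (A⁻¹ *ᵥ (φ - ZP)) / (ξ ⬝ᵥ (φ - ZP))
            = Real.sqrt (ZK ⬝ᵥ (A⁻¹ *ᵥ ZK)) / Real.sqrt (h ^ 2 - ξ ⬝ᵥ (A *ᵥ ξ)) := by
          rw [div_eq_div_iff (ne_of_gt hippos) (ne_of_gt hspos), ← ht2, e1]
          linear_combination Real.sqrt ((φ - ZP) ⬝ᵥ (A⁻¹ *ᵥ (φ - ZP))) * e3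
        rw [hφbar, ← e7, e6]
        abel
end

section
/- Let Z¹ and Z² be nonnegative martingales on a filtered probability space with Z¹_0 = Z²_0 = 1 (so E[Z¹_T] = E[Z²_T] = 1), and let τ ≤ T be a stopping time. Define Z_T := Z¹_τ · (Z²_T / Z²_τ) on the event {Z²_τ > 0} and Z_T := Z¹_τ on {Z²_τ = 0}. Then E[Z_T] = 1. -/
open MeasureTheory

open MeasureTheory Filter Set Topology
open scoped ENNReal NNReal

section Aux

variable {Ω : Type*} {m0 : MeasurableSpace Ω}

/-- Dyadic upper approximation of a stopping time, capped at `T`. -/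
noncomputable def dyadApprox (τ : Ω → ℝ) (T : ℝ) (n : ℕ) (ω : Ω) : ℝ :=
  min ((⌈τ ω * 2 ^ n⌉₊ : ℝ) / 2 ^ n) T

lemma le_dyadApprox {τ : Ω → ℝ} {T : ℝ} (hτT : ∀ ω, τ ω ≤ T) (n : ℕ) (ω : Ω) :
    τ ω ≤ dyadApprox τ T n ω := by
  refine le_min ?_ (hτT ω)
  rw [le_div_iff₀ (by positivity : (0:ℝ) < 2 ^ n)]
  exact Nat.le_ceil _

lemma dyadApprox_le {τ : Ω → ℝ} {T : ℝ} (n : ℕ) (ω : Ω) : dyadApprox τ T n ω ≤ T :=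
  min_le_right _ _

lemma dyadApprox_antitone {τ : Ω → ℝ} {T : ℝ} (n : ℕ) (ω : Ω) :
    dyadApprox τ T (n + 1) ω ≤ dyadApprox τ T n ω := by
  refine min_le_min ?_ le_rfl
  rw [div_le_div_iff₀ (by positivity) (by positivity)]
  have h1 : (⌈τ ω * 2 ^ (n+1)⌉₊ : ℝ) ≤ 2 * (⌈τ ω * 2 ^ n⌉₊ : ℝ) := by
    have : (⌈τ ω * 2 ^ (n+1)⌉₊ : ℕ) ≤ 2 * ⌈τ ω * 2 ^ n⌉₊ := by
      rw [Nat.ceil_le]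
      push_cast
      have h2 : τ ω * 2 ^ (n+1) = 2 * (τ ω * 2 ^ n) := by ring
      have := Nat.le_ceil (τ ω * 2 ^ n)
      linarith
    exact_mod_cast le_trans (Nat.cast_le.mpr this) (by push_cast; ring_nf; exact le_rfl)
  calc (⌈τ ω * 2 ^ (n+1)⌉₊ : ℝ) * 2 ^ n ≤ 2 * (⌈τ ω * 2 ^ n⌉₊ : ℝ) * 2 ^ n := by
        exact mul_le_mul_of_nonneg_right h1 (by positivity)
    _ = (⌈τ ω * 2 ^ n⌉₊ : ℝ) * 2 ^ (n+1) := by ring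

lemma dyadApprox_tendsto {τ : Ω → ℝ} {T : ℝ} (hτ0 : ∀ ω, 0 ≤ τ ω) (hτT : ∀ ω, τ ω ≤ T)
    (ω : Ω) : Tendsto (fun n => dyadApprox τ T n ω) atTop (𝓝 (τ ω)) := by
  have hub : ∀ n, dyadApprox τ T n ω ≤ τ ω + (1 / 2 : ℝ) ^ n := by
    intro n
    refine (min_le_left _ _).trans ?_
    rw [div_le_iff₀ (by positivity : (0:ℝ) < 2 ^ n)]
    have := (Nat.ceil_lt_add_one (mul_nonneg (hτ0 ω) (by positivity) : (0:ℝ) ≤ τ ω * 2 ^ n)).le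
    calc (⌈τ ω * 2 ^ n⌉₊ : ℝ) ≤ τ ω * 2 ^ n + 1 := this
      _ = (τ ω + (1/2)^n) * 2 ^ n := by
          field_simp
          have h : (2:ℝ) ^ n * (1 / 2) ^ n = 1 := by rw [← mul_pow]; norm_num
          rw [mul_add, h]; ring
  have h2 : Tendsto (fun n : ℕ => τ ω + (1 / 2 : ℝ) ^ n) atTop (𝓝 (τ ω)) := by
    have := tendsto_pow_atTop_nhds_zero_of_lt_one (by norm_num : (0:ℝ) ≤ 1/2)
      (by norm_num : (1/2:ℝ) < 1)
    simpa using tendsto_const_nhds.add this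
  exact tendsto_of_tendsto_of_tendsto_of_le_of_le tendsto_const_nhds h2
    (fun n => le_dyadApprox hτT n ω) hub

lemma isStoppingTime_dyadApprox {𝒢 : Filtration ℝ m0} {τ : Ω → ℝ} {T : ℝ}
    (hτ : IsStoppingTime 𝒢 (fun ω => (τ ω : WithTop ℝ))) (hτ0 : ∀ ω, 0 ≤ τ ω) (n : ℕ) :
    IsStoppingTime 𝒢 (fun ω => (dyadApprox τ T n ω : WithTop ℝ)) := by
  suffices h : IsStoppingTime 𝒢
      (fun ω => min ((((⌈τ ω * 2 ^ n⌉₊ : ℝ) / 2 ^ n : ℝ)) : WithTop ℝ) (T : WithTop ℝ)) by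
    convert h using 2 with ω
    simp [dyadApprox, WithTop.coe_min]
  refine IsStoppingTime.min_const ?_ T
  intro t
  simp only [WithTop.coe_le_coe]
  rcases le_or_gt 0 t with ht | ht
  · have hset : {ω | (⌈τ ω * 2 ^ n⌉₊ : ℝ) / 2 ^ n ≤ t}
        = {ω | τ ω ≤ (⌊t * 2 ^ n⌋₊ : ℝ) / 2 ^ n} := by
      ext ω
      simp only [Set.mem_setOf_eq]
      have h2n : (0:ℝ) < 2 ^ n := by positivity
      constructor
      · intro h
        rw [div_le_iff₀ h2n] at h
        have h1 : ⌈τ ω * 2 ^ n⌉₊ ≤ ⌊t * 2 ^ n⌋₊ := Nat.le_floor h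
        rw [le_div_iff₀ h2n]
        exact le_trans (Nat.le_ceil _) (Nat.cast_le.mpr h1)
      · intro h
        rw [le_div_iff₀ h2n] at h
        rw [div_le_iff₀ h2n]
        have h1 : ⌈τ ω * 2 ^ n⌉₊ ≤ ⌊t * 2 ^ n⌋₊ := Nat.ceil_le.mpr h
        exact le_trans (Nat.cast_le.mpr h1) (Nat.floor_le (by positivity))
    rw [hset]
    refine 𝒢.mono ?_ _ (by simpa only [WithTop.coe_le_coe] using hτ ((⌊t * 2 ^ n⌋₊ : ℝ) / 2 ^ n))
    rw [div_le_iff₀ (by positivity : (0:ℝ) < 2 ^ n)]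
    exact Nat.floor_le (by positivity)
  · have hset : {ω | (⌈τ ω * 2 ^ n⌉₊ : ℝ) / 2 ^ n ≤ t} = (∅ : Set Ω) := by
      ext ω
      simp only [Set.mem_setOf_eq, Set.mem_empty_iff_false, iff_false, not_le]
      exact lt_of_lt_of_le ht (by positivity)
    rw [hset]
    exact @MeasurableSet.empty _ (𝒢 t)

lemma dyadApprox_countable_range {τ : Ω → ℝ} {T : ℝ} (n : ℕ) :
    (Set.range (dyadApprox τ T n)).Countable := by
  refine Set.Countable.mono ?_ (((Set.countable_range
    (fun k : ℕ => (k : ℝ) / 2 ^ n))).union (Set.countable_singleton T))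
  rintro x ⟨ω, rfl⟩
  rcases min_cases ((⌈τ ω * 2 ^ n⌉₊ : ℝ) / 2 ^ n) T with ⟨h, _⟩ | ⟨h, _⟩
  · exact Or.inl ⟨_, h.symm⟩
  · exact Or.inr (by simp [dyadApprox, h])

end Aux

section Aux2

variable {Ω : Type*} {m0 : MeasurableSpace Ω} {𝒢 : Filtration ℝ m0}

lemma measurable_stoppedValue_of_countable {f : ℝ → Ω → ℝ} (hf : StronglyAdapted 𝒢 f)
    {σ : Ω → ℝ} (hσ : IsStoppingTime 𝒢 (fun ω => (σ ω : WithTop ℝ))) (hc : (Set.range σ).Countable) :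
    Measurable[hσ.measurableSpace] (stoppedValue f (fun ω => (σ ω : WithTop ℝ))) := by
  intro s hs
  have hpre : stoppedValue f (fun ω => (σ ω : WithTop ℝ)) ⁻¹' s = ⋃ v ∈ Set.range σ, ({ω | σ ω = v} ∩ f v ⁻¹' s) := by
    ext ω
    simp only [Set.mem_preimage, Set.mem_iUnion, Set.mem_inter_iff, Set.mem_setOf_eq,
      Set.mem_range, stoppedValue]
    constructor
    · intro h
      exact ⟨σ ω, ⟨ω, rfl⟩, rfl, h⟩
    · rintro ⟨v, _, rfl, h⟩
      exact h
  rw [hpre]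
  refine MeasurableSet.biUnion hc fun v _ => ?_
  have hσeq : ∀ {i j : ℝ}, i ≤ j → MeasurableSet[𝒢 j] {ω | σ ω = i} := fun {i j} hle => by
    simpa only [WithTop.coe_inj] using hσ.measurableSet_eq_le hle
  rw [hσ.measurableSet]
  refine ⟨le_iSup (fun t => (𝒢 t : MeasurableSpace Ω)) v _
    ((hσeq le_rfl).inter ((hf v).measurable hs)), fun t => ?_⟩
  simp only [WithTop.coe_le_coe]
  by_cases hvt : v ≤ t
  · have : {ω | σ ω = v} ∩ f v ⁻¹' s ∩ {ω | σ ω ≤ t} = {ω | σ ω = v} ∩ f v ⁻¹' s := by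
      ext ω
      simp only [Set.mem_inter_iff, Set.mem_setOf_eq, and_iff_left_iff_imp]
      rintro ⟨rfl, _⟩
      exact hvt
    rw [this]
    exact (hσeq hvt).inter (𝒢.mono hvt _ ((hf v).measurable hs))
  · have : {ω | σ ω = v} ∩ f v ⁻¹' s ∩ {ω | σ ω ≤ t} = (∅ : Set Ω) := by
      ext ω
      simp only [Set.mem_inter_iff, Set.mem_setOf_eq, Set.mem_empty_iff_false, iff_false]
      rintro ⟨⟨rfl, _⟩, h2⟩
      exact hvt h2
    rw [this]
    exact @MeasurableSet.empty _ (𝒢 t)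

lemma ae_forall_nonneg {P : Measure Ω} (f : ℝ → Ω → ℝ) (hpos : ∀ t, 0 ≤ᵐ[P] f t)
    (hrc : ∀ ω, ∀ t, ContinuousWithinAt (fun s => f s ω) (Set.Ici t) t) :
    ∀ᵐ ω ∂P, ∀ t, 0 ≤ f t ω := by
  have hq : ∀ᵐ ω ∂P, ∀ q : ℚ, 0 ≤ f q ω := ae_all_iff.mpr fun q => hpos q
  filter_upwards [hq] with ω hω t
  -- choose rationals decreasing to t from above
  have hchoice : ∀ k : ℕ, ∃ q : ℚ, t < (q:ℝ) ∧ (q:ℝ) < t + 1 / (k + 1) := by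
    intro k
    obtain ⟨q, hq1, hq2⟩ := exists_rat_btwn
      (lt_add_of_pos_right t (by positivity : (0:ℝ) < 1 / ((k:ℝ) + 1)))
    exact ⟨q, hq1, hq2⟩
  choose q hq1 hq2 using hchoice
  have htend : Filter.Tendsto (fun k => ((q k : ℝ))) atTop (𝓝[Set.Ici t] t) := by
    refine tendsto_nhdsWithin_of_tendsto_nhds_of_eventually_within _ ?_ ?_
    · have hub : Filter.Tendsto (fun k : ℕ => t + 1 / ((k:ℝ) + 1)) atTop (𝓝 t) := by
        have := tendsto_one_div_add_atTop_nhds_zero_nat (𝕜 := ℝ)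
        simpa using tendsto_const_nhds.add this
      exact tendsto_of_tendsto_of_tendsto_of_le_of_le tendsto_const_nhds hub
        (fun k => (hq1 k).le) (fun k => (hq2 k).le)
    · exact Filter.Eventually.of_forall fun k => (hq1 k).le
  have hft : Filter.Tendsto (fun k => f (q k) ω) atTop (𝓝 (f t ω)) :=
    (hrc ω t).tendsto.comp htend
  exact ge_of_tendsto' hft fun k => hω (q k)

end Aux2

section Aux3

variable {Ω : Type*} {m0 : MeasurableSpace Ω}

lemma optional_sampling_aux (P : Measure Ω) [IsProbabilityMeasure P] (𝒢 : Filtration ℝ m0)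
    {T : ℝ} {τ : Ω → ℝ} (hτ : IsStoppingTime 𝒢 (fun ω => (τ ω : WithTop ℝ))) (hτ0 : ∀ ω, 0 ≤ τ ω) (hτT : ∀ ω, τ ω ≤ T) :
    ∃ m : MeasurableSpace Ω, m ≤ m0 ∧
      ∀ f : ℝ → Ω → ℝ, Martingale f 𝒢 P →
        (∀ ω, ∀ t, ContinuousWithinAt (fun s => f s ω) (Set.Ici t) t) →
        Measurable[m] (stoppedValue f (fun ω => (τ ω : WithTop ℝ))) ∧ Integrable (stoppedValue f (fun ω => (τ ω : WithTop ℝ))) P ∧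
        ∀ s : Set Ω, MeasurableSet[m] s →
          ∫ ω in s, stoppedValue f (fun ω => (τ ω : WithTop ℝ)) ω ∂P = ∫ ω in s, f T ω ∂P := by
  set σ : ℕ → Ω → WithTop ℝ := fun n ω => (dyadApprox τ T n ω : WithTop ℝ) with hσdef
  have hσ : ∀ n, IsStoppingTime 𝒢 (σ n) := fun n => isStoppingTime_dyadApprox hτ hτ0 n
  refine ⟨⨅ n, (hσ n).measurableSpace, le_trans (iInf_le _ 0) (hσ 0).measurableSpace_le, ?_⟩
  intro f hm hrc
  have htends : ∀ ω, Filter.Tendsto (fun n => stoppedValue f (σ n) ω) atTop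
      (𝓝 (stoppedValue f (fun ω => (τ ω : WithTop ℝ)) ω)) := by
    intro ω
    have h1 : Filter.Tendsto (fun n => dyadApprox τ T n ω) atTop (𝓝[Set.Ici (τ ω)] (τ ω)) :=
      tendsto_nhdsWithin_of_tendsto_nhds_of_eventually_within _
        (dyadApprox_tendsto hτ0 hτT ω)
        (Filter.Eventually.of_forall fun n => le_dyadApprox hτT n ω)
    exact (hrc ω (τ ω)).tendsto.comp h1
  have hanti : Antitone fun n => (hσ n).measurableSpace :=
    antitone_nat_of_succ_le fun n =>
      IsStoppingTime.measurableSpace_mono _ _ fun ω => WithTop.coe_le_coe.mpr (dyadApprox_antitone n ω)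
  have hcond : ∀ n, stoppedValue f (σ n) =ᵐ[P] P[f T|(hσ n).measurableSpace] := fun n =>
    hm.stoppedValue_ae_eq_condExp_of_le_const_of_countable_range (hσ n)
      (fun ω => WithTop.coe_le_coe.mpr (dyadApprox_le n ω))
      (((dyadApprox_countable_range n).image (fun x : ℝ => (x : WithTop ℝ))).mono
        (by rintro _ ⟨ω, rfl⟩; exact ⟨_, ⟨ω, rfl⟩, rfl⟩))
  have hmeasn : ∀ n, Measurable[(hσ n).measurableSpace] (stoppedValue f (σ n)) := fun n =>
    measurable_stoppedValue_of_countable (σ := dyadApprox τ T n) hm.stronglyAdapted (hσ n) (dyadApprox_countable_range n)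
  have hmeas : Measurable[⨅ n, (hσ n).measurableSpace] (stoppedValue f (fun ω => (τ ω : WithTop ℝ))) := by
    suffices h : ∀ n, Measurable[(hσ n).measurableSpace] (stoppedValue f (fun ω => (τ ω : WithTop ℝ))) by
      intro s hs
      rw [MeasurableSpace.measurableSet_iInf]
      exact fun n => h n hs
    intro n
    have hk : ∀ k, Measurable[(hσ n).measurableSpace] (stoppedValue f (σ (k + n))) := fun k =>
      (hmeasn (k + n)).mono (hanti (Nat.le_add_left n k)) le_rfl
    letI : MeasurableSpace Ω := (hσ n).measurableSpace
    exact measurable_of_tendsto_metrizable hk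
      (tendsto_pi_nhds.mpr fun ω => (htends ω).comp (tendsto_add_atTop_nat n))
  have hintn : ∀ n, Integrable (stoppedValue f (σ n)) P := fun n =>
    integrable_condExp.congr (hcond n).symm
  have hint : Integrable (stoppedValue f (fun ω => (τ ω : WithTop ℝ))) P := by
    constructor
    · exact (hmeas.mono (le_trans (iInf_le _ 0) (hσ 0).measurableSpace_le)
        le_rfl).aestronglyMeasurable
    · rw [hasFiniteIntegral_def]
      have hb : ∀ n, ∫⁻ ω, (‖stoppedValue f (σ n) ω‖ₑ : ℝ≥0∞) ∂P ≤ eLpNorm (f T) 1 P := by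
        intro n
        rw [← eLpNorm_one_eq_lintegral_enorm, eLpNorm_congr_ae (hcond n)]
        exact eLpNorm_one_condExp_le_eLpNorm _
      have heq : ∀ ω, (‖stoppedValue f (fun ω => (τ ω : WithTop ℝ)) ω‖ₑ : ℝ≥0∞)
          = Filter.liminf (fun n => (‖stoppedValue f (σ n) ω‖ₑ : ℝ≥0∞)) atTop := fun ω =>
        (((htends ω).enorm).liminf_eq).symm
      calc ∫⁻ ω, (‖stoppedValue f (fun ω => (τ ω : WithTop ℝ)) ω‖ₑ : ℝ≥0∞) ∂P
          = ∫⁻ ω, Filter.liminf (fun n => (‖stoppedValue f (σ n) ω‖ₑ : ℝ≥0∞)) atTop ∂P :=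
            lintegral_congr fun ω => heq ω
        _ ≤ Filter.liminf (fun n => ∫⁻ ω, (‖stoppedValue f (σ n) ω‖ₑ : ℝ≥0∞) ∂P) atTop :=
            lintegral_liminf_le' fun n => (hintn n).aestronglyMeasurable.aemeasurable.enorm
        _ ≤ eLpNorm (f T) 1 P :=
            Filter.liminf_le_of_frequently_le
              ((Filter.Eventually.of_forall hb).frequently)
        _ < ⊤ := (memLp_one_iff_integrable.mpr (hm.integrable T)).eLpNorm_lt_top
  have hui : UnifIntegrable (fun n => stoppedValue f (σ n)) 1 P := by
    have h := (hm.integrable T).uniformIntegrable_condExp fun n => (hσ n).measurableSpace_le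
    exact h.2.1.ae_eq fun n => (hcond n).symm
  have hvit : Filter.Tendsto
      (fun n => eLpNorm (stoppedValue f (σ n) - stoppedValue f (fun ω => (τ ω : WithTop ℝ))) 1 P) atTop (𝓝 0) :=
    tendsto_Lp_finite_of_tendsto_ae le_rfl ENNReal.one_ne_top
      (fun n => (hintn n).aestronglyMeasurable) (memLp_one_iff_integrable.mpr hint) hui
      (Filter.Eventually.of_forall htends)
  refine ⟨hmeas, hint, fun s hs => ?_⟩
  have hsn : ∀ n, MeasurableSet[(hσ n).measurableSpace] s :=
    MeasurableSpace.measurableSet_iInf.mp hs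
  have hconst : ∀ n, ∫ ω in s, stoppedValue f (σ n) ω ∂P = ∫ ω in s, f T ω ∂P := by
    intro n
    rw [setIntegral_congr_ae ((hσ n).measurableSpace_le s (hsn n))
      ((hcond n).mono fun ω h _ => h)]
    exact setIntegral_condExp (hσ n).measurableSpace_le (hm.integrable T) (hsn n)
  have htendInt : Filter.Tendsto (fun n => ∫ ω in s, stoppedValue f (σ n) ω ∂P) atTop
      (𝓝 (∫ ω in s, stoppedValue f (fun ω => (τ ω : WithTop ℝ)) ω ∂P)) := by
    refine tendsto_setIntegral_of_L1 _ hint.aestronglyMeasurable (Filter.Eventually.of_forall hintn) ?_ s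
    have hrw : ∀ n, eLpNorm (stoppedValue f (σ n) - stoppedValue f (fun ω => (τ ω : WithTop ℝ))) 1 P
        = ∫⁻ x, (‖stoppedValue f (σ n) x - stoppedValue f (fun ω => (τ ω : WithTop ℝ)) x‖ₑ : ℝ≥0∞) ∂P := fun n => by
      rw [eLpNorm_one_eq_lintegral_enorm]; rfl
    simp_rw [hrw] at hvit
    exact hvit
  simp only [hconst] at htendInt
  exact tendsto_nhds_unique htendInt tendsto_const_nhds

end Aux3

/-- For nonnegative càdlàg martingales `Z¹, Z²` with unit initial value and a stopping
time `τ ≤ T`, the pasted density `Z_T = Z¹_τ Z²_T / Z²_τ` (set to `Z¹_τ` on `{Z²_τ = 0}`)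
has expectation one. -/
theorem stmt13 {Ω : Type*} {m0 : MeasurableSpace Ω} (P : Measure Ω) [IsProbabilityMeasure P]
    (𝒢 : Filtration ℝ m0) (T : ℝ) (hT : 0 ≤ T)
    (Z1 Z2 : ℝ → Ω → ℝ)
    (hm1 : Martingale Z1 𝒢 P) (hm2 : Martingale Z2 𝒢 P)
    (hpos1 : ∀ t, 0 ≤ᵐ[P] Z1 t) (hpos2 : ∀ t, 0 ≤ᵐ[P] Z2 t)
    (hrc1 : ∀ ω, ∀ t, ContinuousWithinAt (fun s => Z1 s ω) (Set.Ici t) t)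
    (hrc2 : ∀ ω, ∀ t, ContinuousWithinAt (fun s => Z2 s ω) (Set.Ici t) t)
    (h01 : Z1 0 =ᵐ[P] fun _ => 1) (h02 : Z2 0 =ᵐ[P] fun _ => 1)
    (τ : Ω → ℝ) (hτ : IsStoppingTime 𝒢 (fun ω => (τ ω : WithTop ℝ)))
    (hτ0 : ∀ ω, 0 ≤ τ ω) (hτT : ∀ ω, τ ω ≤ T)
    (ZT : Ω → ℝ)
    (hZT : ∀ ω, ZT ω =
      if 0 < Z2 (τ ω) ω then Z1 (τ ω) ω * (Z2 T ω / Z2 (τ ω) ω) else Z1 (τ ω) ω) :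
    ∫ ω, ZT ω ∂P = 1 := by
  obtain ⟨m, hmle, hOS⟩ := optional_sampling_aux P 𝒢 hτ hτ0 hτT
  obtain ⟨hY1meas, hY1int, hOS1⟩ := hOS Z1 hm1 hrc1
  obtain ⟨hY2meas, hY2int, hOS2⟩ := hOS Z2 hm2 hrc2
  set Y1 : Ω → ℝ := stoppedValue Z1 (fun ω => (τ ω : WithTop ℝ)) with hY1def
  set Y2 : Ω → ℝ := stoppedValue Z2 (fun ω => (τ ω : WithTop ℝ)) with hY2def
  have hZT' : ∀ ω, ZT ω = if 0 < Y2 ω then Y1 ω * (Z2 T ω / Y2 ω) else Y1 ω := hZT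
  have hae1 : ∀ᵐ ω ∂P, 0 ≤ Y1 ω :=
    (ae_forall_nonneg Z1 hpos1 hrc1).mono fun ω h => h (τ ω)
  have hae2 : ∀ᵐ ω ∂P, 0 ≤ Y2 ω :=
    (ae_forall_nonneg Z2 hpos2 hrc2).mono fun ω h => h (τ ω)
  have hae2T : 0 ≤ᵐ[P] Z2 T := hpos2 T
  have hY1m0 : Measurable[m0] Y1 := hY1meas.mono hmle le_rfl
  have hY2m0 : Measurable[m0] Y2 := hY2meas.mono hmle le_rfl
  have hZ2T : Measurable[m0] (Z2 T) := ((hm2.stronglyAdapted T).measurable).mono (𝒢.le T) le_rfl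
  have hZTmeas : Measurable[m0] ZT := by
    have h : ZT = fun ω => if 0 < Y2 ω then Y1 ω * (Z2 T ω / Y2 ω) else Y1 ω := funext hZT'
    rw [h]
    exact Measurable.ite (measurableSet_lt measurable_const hY2m0)
      (hY1m0.mul (hZ2T.div hY2m0)) hY1m0
  have hZTnn : 0 ≤ᵐ[P] ZT := by
    filter_upwards [hae1, hae2T] with ω h1 h2
    rw [hZT' ω]
    split_ifs with h
    · exact mul_nonneg h1 (div_nonneg h2 h.le)
    · exact h1
  -- move to ENNReal
  set G : Ω → ℝ≥0∞ := fun ω => ENNReal.ofReal (Z2 T ω) with hGdef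
  set F1 : Ω → ℝ≥0∞ := fun ω => ENNReal.ofReal (Y1 ω) with hF1def
  set F2 : Ω → ℝ≥0∞ := fun ω => ENNReal.ofReal (Y2 ω) with hF2def
  have hGmeas : Measurable[m0] G := hZ2T.ennreal_ofReal
  have hF1m0 : Measurable[m0] F1 := hY1m0.ennreal_ofReal
  have hF2m0 : Measurable[m0] F2 := hY2m0.ennreal_ofReal
  have hF1meas : Measurable[m] F1 := hY1meas.ennreal_ofReal
  have hF2meas : Measurable[m] F2 := hY2meas.ennreal_ofReal
  set A : Set Ω := {ω | 0 < Y2 ω} with hAdef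
  have hA : MeasurableSet[m] A := measurableSet_lt measurable_const hY2meas
  have hAm0 : MeasurableSet[m0] A := hmle _ hA
  set g' : Ω → ℝ≥0∞ := A.indicator (fun ω => F1 ω / F2 ω) with hg'def
  have hg' : Measurable[m] g' := (hF1meas.div hF2meas).indicator hA
  have hg'0 : Measurable[m0] g' := hg'.mono hmle le_rfl
  -- the two densities agree on m
  have htrim : (P.withDensity G).trim hmle = (P.withDensity F2).trim hmle := by
    refine Measure.ext fun s hs => ?_
    rw [trim_measurableSet_eq hmle hs, trim_measurableSet_eq hmle hs,
      withDensity_apply _ (hmle s hs), withDensity_apply _ (hmle s hs)]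
    have h1 : ∫⁻ ω in s, G ω ∂P = ENNReal.ofReal (∫ ω in s, Z2 T ω ∂P) :=
      (ofReal_integral_eq_lintegral_ofReal ((hm2.integrable T).restrict)
        (ae_restrict_of_ae hae2T)).symm
    have h2 : ∫⁻ ω in s, F2 ω ∂P = ENNReal.ofReal (∫ ω in s, Y2 ω ∂P) :=
      (ofReal_integral_eq_lintegral_ofReal (hY2int.restrict)
        (ae_restrict_of_ae hae2)).symm
    rw [h1, h2, hOS2 s hs]
  have key : ∫⁻ ω, g' ω * G ω ∂P = ∫⁻ ω, g' ω * F2 ω ∂P := by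
    calc ∫⁻ ω, g' ω * G ω ∂P = ∫⁻ ω, (G * g') ω ∂P := by
          simp only [Pi.mul_apply, mul_comm]
      _ = ∫⁻ ω, g' ω ∂(P.withDensity G) :=
          (lintegral_withDensity_eq_lintegral_mul P hGmeas hg'0).symm
      _ = ∫⁻ ω, g' ω ∂((P.withDensity G).trim hmle) := (lintegral_trim hmle hg').symm
      _ = ∫⁻ ω, g' ω ∂((P.withDensity F2).trim hmle) := by rw [htrim]
      _ = ∫⁻ ω, g' ω ∂(P.withDensity F2) := lintegral_trim hmle hg'
      _ = ∫⁻ ω, (F2 * g') ω ∂P := lintegral_withDensity_eq_lintegral_mul P hF2m0 hg'0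
      _ = ∫⁻ ω, g' ω * F2 ω ∂P := by simp only [Pi.mul_apply, mul_comm]
  -- pointwise identification of the integrand
  have hstep1 : (fun ω => ENNReal.ofReal (ZT ω)) =ᵐ[P]
      fun ω => g' ω * G ω + Aᶜ.indicator F1 ω := by
    filter_upwards [hae1, hae2T] with ω h1 h2
    by_cases hmem : ω ∈ A
    · have hY2pos : 0 < Y2 ω := hmem
      have hnc : ω ∉ Aᶜ := fun hc => hc hmem
      simp only [hg'def, Set.indicator_of_mem hmem, Set.indicator_of_notMem hnc, add_zero]
      rw [hZT' ω, if_pos hY2pos]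
      rw [ENNReal.ofReal_mul h1, ENNReal.ofReal_div_of_pos hY2pos]
      rw [div_eq_mul_inv, div_eq_mul_inv]
      ring
    · have hY2np : ¬ 0 < Y2 ω := hmem
      simp only [hg'def, Set.indicator_of_notMem hmem,
        Set.indicator_of_mem (Set.mem_compl hmem), zero_mul, zero_add]
      rw [hZT' ω, if_neg hY2np]
  have hmul : ∀ ω, g' ω * F2 ω = A.indicator F1 ω := by
    intro ω
    by_cases hmem : ω ∈ A
    · simp only [hg'def, Set.indicator_of_mem hmem]
      exact ENNReal.div_mul_cancel (ENNReal.ofReal_pos.mpr hmem).ne' ENNReal.ofReal_ne_top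
    · simp [hg'def, Set.indicator_of_notMem hmem]
  have hsum : ∫⁻ ω, ENNReal.ofReal (ZT ω) ∂P = ∫⁻ ω, F1 ω ∂P := by
    calc ∫⁻ ω, ENNReal.ofReal (ZT ω) ∂P
        = ∫⁻ ω, g' ω * G ω + Aᶜ.indicator F1 ω ∂P := lintegral_congr_ae hstep1
      _ = ∫⁻ ω, g' ω * G ω ∂P + ∫⁻ ω, Aᶜ.indicator F1 ω ∂P :=
          lintegral_add_left (hg'0.mul hGmeas) _
      _ = ∫⁻ ω, g' ω * F2 ω ∂P + ∫⁻ ω, Aᶜ.indicator F1 ω ∂P := by rw [key]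
      _ = ∫⁻ ω, A.indicator F1 ω ∂P + ∫⁻ ω, Aᶜ.indicator F1 ω ∂P := by
          simp only [hmul]
      _ = ∫⁻ ω, A.indicator F1 ω + Aᶜ.indicator F1 ω ∂P :=
          (lintegral_add_left (hF1m0.indicator hAm0) (fun ω => Aᶜ.indicator F1 ω)).symm
      _ = ∫⁻ ω, F1 ω ∂P := by
          refine lintegral_congr fun ω => ?_
          exact congrFun (Set.indicator_self_add_compl A F1) ω
  have hEY1 : ∫ ω, Y1 ω ∂P = 1 := by
    have h1 : ∫ ω, Y1 ω ∂P = ∫ ω, Z1 T ω ∂P := by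
      have h := hOS1 Set.univ (@MeasurableSet.univ Ω m)
      simpa [Measure.restrict_univ] using h
    have h2 : ∫ ω, Z1 T ω ∂P = ∫ ω, Z1 0 ω ∂P := by
      rw [← integral_condExp (𝒢.le 0) (μ := P) (f := Z1 T)]
      exact integral_congr_ae (hm1.condExp_ae_eq hT)
    have h3 : ∫ ω, Z1 0 ω ∂P = 1 := by
      rw [integral_congr_ae h01]
      simp [measure_univ]
    rw [h1, h2, h3]
  have hF1one : ∫⁻ ω, F1 ω ∂P = 1 := by
    rw [hF1def, ← ofReal_integral_eq_lintegral_ofReal hY1int hae1, hEY1, ENNReal.ofReal_one]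
  have hsm : AEStronglyMeasurable[m0] ZT P := hZTmeas.aestronglyMeasurable
  rw [integral_eq_lintegral_of_nonneg_ae hZTnn hsm, hsum, hF1one, ENNReal.toReal_one]
end

section
/- Let d < n, σ ∈ ℝ^{d×n} of full rank, A ∈ ℝ^{n×n} symmetric positive definite with ellipticity constant α′ > 0 for A⁻¹, and let ξ ∈ Im(σᵀ) with |ξ| < h·√α′ for some h > 0. Fix z ∈ ℝⁿ and define F(φ) := −ξᵀφ + h·√((z−φ)ᵀA⁻¹(z−φ)) for φ ∈ ℝⁿ. If Π⊥(z) ≠ 0, then F is strictly convex on the subspace Im(σᵀ) (equivalently on {φ : Π⊥(φ) = 0}). -/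
open Matrix

private lemma inter_triv15 {d n : ℕ} (σ : Matrix (Fin d) (Fin n) ℝ) (x : Fin n → ℝ)
    (hx1 : x ∈ LinearMap.range (σᵀ.mulVecLin)) (hx2 : x ∈ LinearMap.ker (σ.mulVecLin)) :
    x = 0 := by
  obtain ⟨y, hy⟩ := hx1
  have h2 : σ *ᵥ x = 0 := hx2
  have : x ⬝ᵥ x = 0 := by
    rw [← hy]
    simp only [mulVecLin_apply] at hy ⊢
    rw [Matrix.dotProduct_mulVec, Matrix.vecMul_transpose, hy, h2]
    simp [Matrix.dotProduct_mulVec]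
  exact (dotProduct_self_eq_zero).mp this

open scoped MatrixOrder in
private lemma sqrt_aux15 {n : ℕ} (A : Matrix (Fin n) (Fin n) ℝ) (hApd : A.PosDef) :
    ∃ B : Matrix (Fin n) (Fin n) ℝ, Bᵀ = B ∧ B * B = A⁻¹ := by
  refine ⟨CFC.sqrt A⁻¹, ?_, CFC.sqrt_mul_sqrt_self _ (nonneg_iff_posSemidef.mpr hApd.inv.posSemidef)⟩
  have := (nonneg_iff_posSemidef.mp (CFC.sqrt_nonneg A⁻¹)).1
  simpa [Matrix.IsHermitian, conjTranspose_eq_transpose_of_trivial] using this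

/-- If `Π⊥(z) ≠ 0`, then `F(φ) = -ξᵀφ + h √((z-φ)ᵀA⁻¹(z-φ))` is strictly convex
on the subspace `Im(σᵀ)`. -/
theorem stmt15 {d n : ℕ} (hd : 0 < d) (hdn : d < n)
    (σ : Matrix (Fin d) (Fin n) ℝ) (hσ : IsUnit (σ * σᵀ).det)
    (A : Matrix (Fin n) (Fin n) ℝ) (hAs : A.IsSymm) (hApd : A.PosDef)
    (α' : ℝ) (hα' : 0 < α')
    (hell : ∀ x : Fin n → ℝ, α' * (x ⬝ᵥ x) ≤ x ⬝ᵥ (A⁻¹ *ᵥ x))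
    (h : ℝ) (hh : 0 < h)
    (ξ : Fin n → ℝ) (hξ : ξ ∈ LinearMap.range (σᵀ.mulVecLin))
    (hξh : Real.sqrt (ξ ⬝ᵥ ξ) < h * Real.sqrt α')
    (z zP zK : Fin n → ℝ)
    (hzP : zP ∈ LinearMap.range (σᵀ.mulVecLin))
    (hzK : zK ∈ LinearMap.ker (σ.mulVecLin))
    (hdec : z = zP + zK) (hzKne : zK ≠ 0) :
    StrictConvexOn ℝ ((LinearMap.range (σᵀ.mulVecLin) : Submodule ℝ (Fin n → ℝ)) : Set (Fin n → ℝ))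
      (fun φ => -(ξ ⬝ᵥ φ) + h * Real.sqrt ((z - φ) ⬝ᵥ (A⁻¹ *ᵥ (z - φ)))) := by
  classical
  obtain ⟨B, hBsymm0, hBB⟩ := sqrt_aux15 A hApd
  have hBsymm : Bᵀ = B := hBsymm0
  set g : (Fin n → ℝ) → EuclideanSpace ℝ (Fin n) :=
    fun x => (WithLp.equiv 2 (Fin n → ℝ)).symm (B *ᵥ x) with hg
  have hnorm : ∀ x : Fin n → ℝ, ‖g x‖ = Real.sqrt (x ⬝ᵥ (A⁻¹ *ᵥ x)) := by
    intro x
    rw [hg, EuclideanSpace.norm_eq]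
    congr 1
    have : ∑ i, ‖(WithLp.equiv 2 (Fin n → ℝ)).symm (B *ᵥ x) i‖ ^ 2 = (B *ᵥ x) ⬝ᵥ (B *ᵥ x) := by
      simp [dotProduct, pow_two]
    rw [this, Matrix.dotProduct_mulVec, ← Matrix.mulVec_transpose, hBsymm,
      Matrix.mulVec_mulVec, hBB, dotProduct_comm]
  have hgsmul : ∀ (c : ℝ) (x : Fin n → ℝ), g (c • x) = c • g x := by
    intro c x; simp [hg, Matrix.mulVec_smul]
  have hgadd : ∀ (x y : Fin n → ℝ), g (x + y) = g x + g y := by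
    intro x y; simp [hg, Matrix.mulVec_add]
  have hgsub : ∀ (x y : Fin n → ℝ), g (x - y) = g x - g y := by
    intro x y; simp [hg, Matrix.mulVec_sub]
  have hginj : ∀ x : Fin n → ℝ, g x = 0 → x = 0 := by
    intro x hx
    by_contra hxne
    have hdn : (0:ℝ) ≤ x ⬝ᵥ x :=
      Finset.sum_nonneg fun i _ => mul_self_nonneg _
    have h1 : 0 < α' * (x ⬝ᵥ x) := by
      have : (0:ℝ) < x ⬝ᵥ x := by
        rcases lt_or_eq_of_le hdn with h' | h'
        · exact h'
        · exact absurd ((dotProduct_self_eq_zero).mp h'.symm) hxne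
      positivity
    have h2 : Real.sqrt (x ⬝ᵥ (A⁻¹ *ᵥ x)) = 0 := by
      rw [← hnorm x, hx, norm_zero]
    have h3 : x ⬝ᵥ (A⁻¹ *ᵥ x) ≤ 0 := by
      by_contra hc
      push_neg at hc
      exact absurd h2 (Real.sqrt_pos.mpr hc).ne'
    linarith [hell x]
  have hne0 : ∀ φ : Fin n → ℝ, φ ∈ LinearMap.range (σᵀ.mulVecLin) → z - φ ≠ 0 := by
    intro φ hφ hc
    apply hzKne
    have hzφ : z = φ := by rwa [sub_eq_zero] at hc
    have hzk' : zK = φ - zP := by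
      funext i
      have := congrFun (hdec.symm.trans hzφ) i
      simp only [Pi.add_apply, Pi.sub_apply] at this ⊢
      linarith
    exact inter_triv15 σ zK (hzk' ▸ Submodule.sub_mem _ hφ hzP) hzK
  constructor
  · exact (LinearMap.range (σᵀ.mulVecLin)).convex
  · intro φ₁ h₁ φ₂ h₂ hne a b ha hb hab
    simp only
    have key : ‖g (z - (a • φ₁ + b • φ₂))‖ < a * ‖g (z - φ₁)‖ + b * ‖g (z - φ₂)‖ := by
      have hdecomp : z - (a • φ₁ + b • φ₂) = a • (z - φ₁) + b • (z - φ₂) := by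
        funext i
        simp only [Pi.sub_apply, Pi.add_apply, Pi.smul_apply, smul_eq_mul]
        have h1 : a * z i + b * z i = z i := by rw [← add_mul, hab, one_mul]
        linarith
      rw [hdecomp, hgadd, hgsmul, hgsmul]
      have hu : g (z - φ₁) ≠ 0 := fun hc => hne0 φ₁ h₁ (hginj _ hc)
      have hv : g (z - φ₂) ≠ 0 := fun hc => hne0 φ₂ h₂ (hginj _ hc)
      have hnot : ¬ SameRay ℝ (a • g (z - φ₁)) (b • g (z - φ₂)) := by
        intro hsr
        obtain ⟨a', b', ha', hb', heq⟩ := hsr.exists_pos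
          (smul_ne_zero ha.ne' hu) (smul_ne_zero hb.ne' hv)
        rw [smul_smul, smul_smul] at heq
        set c₁ := a' * a with hc₁
        set c₂ := b' * b with hc₂
        have hc₁p : 0 < c₁ := mul_pos ha' ha
        have hc₂p : 0 < c₂ := mul_pos hb' hb
        have heq2 : c₁ • (z - φ₁) = c₂ • (z - φ₂) := by
          have : g (c₁ • (z - φ₁) - c₂ • (z - φ₂)) = 0 := by
            rw [hgsub, hgsmul, hgsmul, heq, sub_self]
          exact sub_eq_zero.mp (hginj _ this)
        have hkey : (c₁ - c₂) • zK = 0 := by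
          apply inter_triv15 σ
          · have hmem : (c₁ - c₂) • z ∈ LinearMap.range (σᵀ.mulVecLin) := by
              have hz' : (c₁ - c₂) • z = c₁ • φ₁ - c₂ • φ₂ := by
                funext i
                have := congrFun heq2 i
                simp only [Pi.smul_apply, Pi.sub_apply, smul_eq_mul] at this ⊢
                linarith
              rw [hz']
              exact Submodule.sub_mem _ (Submodule.smul_mem _ _ h₁) (Submodule.smul_mem _ _ h₂)
            have hzk2 : (c₁ - c₂) • zK = (c₁ - c₂) • z - (c₁ - c₂) • zP := by
              rw [hdec]
              funext i
              simp only [Pi.smul_apply, Pi.sub_apply, Pi.add_apply, smul_eq_mul]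
              ring
            rw [hzk2]
            exact Submodule.sub_mem _ hmem (Submodule.smul_mem _ _ hzP)
          · exact Submodule.smul_mem _ _ hzK
        have hcc : c₁ = c₂ := by
          rcases smul_eq_zero.mp hkey with h' | h'
          · exact sub_eq_zero.mp h'
          · exact absurd h' hzKne
        rw [hcc] at heq2
        have hzz : z - φ₁ = z - φ₂ := smul_right_injective (Fin n → ℝ) hc₂p.ne' heq2
        exact hne (by
          funext i
          have := congrFun hzz i
          simp only [Pi.sub_apply] at this
          linarith)
      calc ‖a • g (z - φ₁) + b • g (z - φ₂)‖
          < ‖a • g (z - φ₁)‖ + ‖b • g (z - φ₂)‖ := norm_add_lt_of_not_sameRay hnot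
        _ = a * ‖g (z - φ₁)‖ + b * ‖g (z - φ₂)‖ := by
            rw [norm_smul, norm_smul, Real.norm_of_nonneg ha.le, Real.norm_of_nonneg hb.le]
    rw [← hnorm, ← hnorm, ← hnorm]
    have hlin : ξ ⬝ᵥ (a • φ₁ + b • φ₂) = a * (ξ ⬝ᵥ φ₁) + b * (ξ ⬝ᵥ φ₂) := by
      simp [dotProduct_add, dotProduct_smul, smul_eq_mul]
    rw [hlin]
    simp only [smul_eq_mul]
    nlinarith [mul_lt_mul_of_pos_left key hh]
end
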